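/- Let A be an n×n real matrix and P an n×n real symmetric positive definite matrix with AᵀP + PA negative definite. Then there exists λ > 0 such that every solution x : ℝ → ℝⁿ of x'(t) = A x(t) satisfies, for all t ≥ 0, x(t)ᵀ P x(t) ≤ e^{-λ t} · (x(0)ᵀ P x(0)). In particular the quadratic Lyapunov function V(x) = xᵀPx decays exponentially along trajectories. -/

import Mathlib

open Matrix Metric Set

/-!
Along a trajectory, `V t = x tᵀ P x t` has derivative `x tᵀ (Aᵀ P + P A) x t`. As the form
`-(Aᵀ P + P A)` is positive definite, compactness of the unit sphere yields `λ > 0` with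
`λ vᵀ P v ≤ -vᵀ (Aᵀ P + P A) v` for every `v`. Hence `V' ≤ -λ V`, and Grönwall's inequality gives
`V t ≤ exp (-λ t) V 0`.
-/

theorem le_exp_mul_of_hasDerivAt_le_mul {f f' : ℝ → ℝ} {K a t : ℝ}
    (hf : ∀ s, HasDerivAt f (f' s) s) (bound : ∀ s, f' s ≤ K * f s) (ht : a ≤ t) :
    f t ≤ Real.exp (K * (t - a)) * f a := by
  have h := le_gronwallBound_of_liminf_deriv_right_le (f := f) (f' := f') (δ := f a) (K := K)
    (ε := 0) (b := t) (fun s _ => (hf s).continuousAt.continuousWithinAt)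
    (fun s _ _ hr => (hf s).hasDerivWithinAt.liminf_right_slope_le hr) le_rfl
    (fun s _ => by simpa using bound s) t ⟨ht, le_rfl⟩
  rwa [gronwallBound_ε0, mul_comm] at h

namespace Matrix

variable {ι : Type*} [Fintype ι]

theorem _root_.HasDerivAt.dotProduct {x y : ℝ → ι → ℝ} {x' y' : ι → ℝ} {t : ℝ}
    (hx : HasDerivAt x x' t) (hy : HasDerivAt y y' t) :
    HasDerivAt (fun s => x s ⬝ᵥ y s) (x' ⬝ᵥ y t + x t ⬝ᵥ y') t := by
  simp only [_root_.dotProduct, ← Finset.sum_add_distrib]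
  exact HasDerivAt.fun_sum fun i _ => (hasDerivAt_pi.1 hx i).mul (hasDerivAt_pi.1 hy i)

theorem _root_.HasDerivAt.mulVec (M : Matrix ι ι ℝ) {x : ℝ → ι → ℝ} {x' : ι → ℝ} {t : ℝ}
    (hx : HasDerivAt x x' t) : HasDerivAt (fun s => M *ᵥ x s) (M *ᵥ x') t :=
  (mulVecLin M).toContinuousLinearMap.hasFDerivAt.comp_hasDerivAt t hx

theorem hasDerivAt_dotProduct_mulVec_of_hasDerivAt_mulVec (A P : Matrix ι ι ℝ)
    {x : ℝ → ι → ℝ} {t : ℝ} (hx : HasDerivAt x (A *ᵥ x t) t) :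
    HasDerivAt (fun s => x s ⬝ᵥ P *ᵥ x s) (x t ⬝ᵥ (Aᵀ * P + P * A) *ᵥ x t) t := by
  convert hx.dotProduct (hx.mulVec P) using 1
  rw [add_mulVec, dotProduct_add, ← mulVec_mulVec, ← mulVec_mulVec, dotProduct_mulVec,
    vecMul_transpose]

theorem dotProduct_smul_mulVec_smul (M : Matrix ι ι ℝ) (c : ℝ) (v : ι → ℝ) :
    (c • v) ⬝ᵥ M *ᵥ (c • v) = c ^ 2 * (v ⬝ᵥ M *ᵥ v) := by
  rw [mulVec_smul, dotProduct_smul, smul_dotProduct, smul_eq_mul, smul_eq_mul]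
  ring

theorem continuous_dotProduct_mulVec (M : Matrix ι ι ℝ) :
    Continuous fun v : ι → ℝ => v ⬝ᵥ M *ᵥ v := by
  simp only [dotProduct, mulVec]
  fun_prop

theorem PosDef.exists_pos_mul_dotProduct_mulVec_le {Q : Matrix ι ι ℝ} (hQ : Q.PosDef)
    (P : Matrix ι ι ℝ) :
    ∃ c : ℝ, 0 < c ∧ ∀ v : ι → ℝ, c * (v ⬝ᵥ P *ᵥ v) ≤ v ⬝ᵥ Q *ᵥ v := by
  have hQpos : ∀ v ≠ 0, 0 < v ⬝ᵥ Q *ᵥ v := fun v hv => by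
    simpa using hQ.dotProduct_mulVec_pos hv
  have hsphere : ∀ u ∈ sphere (0 : ι → ℝ) 1, u ≠ 0 := fun u hu =>
    ne_of_mem_sphere hu one_ne_zero
  -- both forms are homogeneous of degree 2, so it suffices to compare them on the unit sphere
  obtain ⟨C, hC⟩ : BddAbove
      ((fun u => (u ⬝ᵥ P *ᵥ u) / (u ⬝ᵥ Q *ᵥ u)) '' sphere (0 : ι → ℝ) 1) :=
    (isCompact_sphere 0 1).bddAbove_image <|
      (continuous_dotProduct_mulVec P).continuousOn.div
        (continuous_dotProduct_mulVec Q).continuousOn fun u hu => (hQpos u (hsphere u hu)).ne'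
  refine ⟨(max C 1)⁻¹, by positivity, fun v => ?_⟩
  rcases eq_or_ne v 0 with rfl | hv
  · simp
  obtain ⟨r, u, hu, rfl⟩ : ∃ r : ℝ, ∃ u ∈ sphere (0 : ι → ℝ) 1, v = r • u :=
    ⟨‖v‖, ‖v‖⁻¹ • v, by simp [norm_smul, hv], by simp [smul_smul, hv]⟩
  have hQu := hQpos u (hsphere u hu)
  have hPu : u ⬝ᵥ P *ᵥ u ≤ max C 1 * (u ⬝ᵥ Q *ᵥ u) := by
    have hratio := hC (mem_image_of_mem _ hu)
    rw [div_le_iff₀ hQu] at hratio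
    exact hratio.trans (mul_le_mul_of_nonneg_right (le_max_left C 1) hQu.le)
  rw [dotProduct_smul_mulVec_smul, dotProduct_smul_mulVec_smul,
    inv_mul_le_iff₀ (by positivity)]
  have := mul_le_mul_of_nonneg_left hPu (sq_nonneg r)
  linarith

end Matrix

theorem statement3_general (n : ℕ) (A P : Matrix (Fin n) (Fin n) ℝ)
    (hLyap : (-((Aᵀ * P) + P * A)).PosDef) :
    ∃ lam : ℝ, 0 < lam ∧
      ∀ x : ℝ → (Fin n → ℝ), (∀ t, HasDerivAt x (A.mulVec (x t)) t) →
        ∀ t : ℝ, 0 ≤ t →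
          x t ⬝ᵥ P.mulVec (x t) ≤ Real.exp (-lam * t) * (x 0 ⬝ᵥ P.mulVec (x 0)) := by
  obtain ⟨lam, hlam, hcoercive⟩ := hLyap.exists_pos_mul_dotProduct_mulVec_le P
  refine ⟨lam, hlam, fun x hx t ht => ?_⟩
  have hV := fun s => hasDerivAt_dotProduct_mulVec_of_hasDerivAt_mulVec A P (hx s)
  have hdecay : ∀ s, x s ⬝ᵥ (Aᵀ * P + P * A) *ᵥ x s ≤ -lam * (x s ⬝ᵥ P *ᵥ x s) := by
    intro s
    have := hcoercive (x s)
    rw [neg_mulVec, dotProduct_neg] at this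
    linarith
  simpa using le_exp_mul_of_hasDerivAt_le_mul hV hdecay ht

/-- if `P ≻ 0` and `Aᵀ P + P A ≺ 0`, then there is `λ > 0` such that
every solution of `x' = A x` satisfies `x(t)ᵀ P x(t) ≤ exp (-λ t) * (x(0)ᵀ P x(0))`
for all `t ≥ 0`. -/
theorem statement3 (n : ℕ) (A P : Matrix (Fin n) (Fin n) ℝ)
    (hP : P.PosDef) (hLyap : (-((Aᵀ * P) + P * A)).PosDef) :
    ∃ lam : ℝ, 0 < lam ∧
      ∀ x : ℝ → (Fin n → ℝ), (∀ t, HasDerivAt x (A.mulVec (x t)) t) →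
        ∀ t : ℝ, 0 ≤ t →
          x t ⬝ᵥ P.mulVec (x t) ≤ Real.exp (-lam * t) * (x 0 ⬝ᵥ P.mulVec (x 0)) :=
  statement3_general n A P hLyap
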